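/- For two connected graphs G and H on vertex sets of sizes n₁ and n₂, the spanning-tree packing number of the Cartesian product satisfies κ_{n₁n₂}(G □ H) ≥ κ_{n₁}(G) + κ_{n₂}(H) − 1, i.e., the maximum number of edge-disjoint spanning trees of G □ H is at least the sum of those of G and H minus one. -/

import Mathlib

open SimpleGraph
open scoped Classical

/-- An `S`-Steiner tree in `G`: a subgraph of `G` which is a tree and contains `S`. -/
def IsSteinerTree {V : Type*} (G : SimpleGraph V) (S : Set V) (T : G.Subgraph) : Prop :=
  S ⊆ T.verts ∧ T.coe.IsTree

/-- The generalized local connectivity `κ_G(S)`: the maximum number of pairwise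
internally disjoint `S`-Steiner trees in `G`. -/
noncomputable def steinerKappa {V : Type*} (G : SimpleGraph V) (S : Set V) : ℕ :=
  sSup {n | ∃ T : Fin n → G.Subgraph, (∀ i, IsSteinerTree G S (T i)) ∧
    ∀ i j, i ≠ j → (T i).edgeSet ∩ (T j).edgeSet = ∅ ∧ (T i).verts ∩ (T j).verts = S}

/-- The generalized local edge-connectivity `λ_G(S)`: the maximum number of pairwise
edge-disjoint `S`-Steiner trees in `G`. -/
noncomputable def steinerLambda {V : Type*} (G : SimpleGraph V) (S : Set V) : ℕ :=
  sSup {n | ∃ T : Fin n → G.Subgraph, (∀ i, IsSteinerTree G S (T i)) ∧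
    ∀ i j, i ≠ j → (T i).edgeSet ∩ (T j).edgeSet = ∅}

/-- The generalized `k`-connectivity `κ_k(G)` (with the convention that it is `0`
for a disconnected graph). -/
noncomputable def genKappa {V : Type*} [Fintype V] (G : SimpleGraph V) (k : ℕ) : ℕ :=
  if G.Connected then sInf {m | ∃ S : Finset V, S.card = k ∧ steinerKappa G ↑S = m} else 0

/-- The generalized `k`-edge-connectivity `λ_k(G)` (with the convention that it is `0`
for a disconnected graph). -/
noncomputable def genLambda {V : Type*} [Fintype V] (G : SimpleGraph V) (k : ℕ) : ℕ :=
  if G.Connected then sInf {m | ∃ S : Finset V, S.card = k ∧ steinerLambda G ↑S = m} else 0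

/-- The edge-connectivity `λ(G)`: the minimum number of edges whose removal disconnects `G`. -/
noncomputable def edgeConn {V : Type*} [Fintype V] (G : SimpleGraph V) : ℕ :=
  sInf {m | ∃ F : Set (Sym2 V), F ⊆ G.edgeSet ∧ F.ncard = m ∧ ¬ (G.deleteEdges F).Connected}

/-- The vertex connectivity `κ(G)`: the minimum size of a vertex set whose removal
disconnects `G` or leaves at most one vertex. -/
noncomputable def vertexConn {V : Type*} [Fintype V] (G : SimpleGraph V) : ℕ :=
  sInf {m | ∃ S : Finset V, S.card = m ∧
    (¬ (G.induce ((↑S : Set V)ᶜ)).Connected ∨ Fintype.card V ≤ m + 1)}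

/-!
With `S = V`, Steiner trees are spanning trees, so `genKappa G |V|` is the spanning tree packing
number of `G` (and `0` when `|V| ≤ 1`). Take edge-disjoint connected spanning subgraphs
`T₀, T₁, …, T_k` of `G` and `S₀, S₁, …, S_l` of `H`. Counting edges gives `2k + 1 ≤ |G|` and
`2l + 1 ≤ |H|`, so there are distinct vertices `x₀, xᵢ, xᵢ'` of `G` and `y₀, yⱼ, yⱼ'` of `H`.
In `G □ H`, the `i`-th graph is `Tᵢ` on every row, linked across rows by `S₀` split between the
columns `xᵢ` and `xᵢ'`; the `j`-th graph is `Sⱼ` on every column, linked by `T₀` split between the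
rows `yⱼ` and `yⱼ'`; one more graph takes what is left of the copies of `T₀` and `S₀`. Each split
separates the edges from the `yⱼ` (resp. the `xᵢ'`) to their parents towards `y₀` (resp. `x₀`),
which is exactly what the last graph needs to step from every doubly marked vertex towards
`(x₀, y₀)`.
-/

open Function Finset

theorem pairwise_disjoint_on_option_sum {ι κ γ : Type*} [PartialOrder γ] [OrderBot γ]
    {f : Option (ι ⊕ κ) → γ} (hll : Pairwise (Disjoint on fun i => f (some (.inl i))))
    (hrr : Pairwise (Disjoint on fun j => f (some (.inr j))))
    (hlr : ∀ i j, Disjoint (f (some (.inl i))) (f (some (.inr j))))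
    (hl : ∀ i, Disjoint (f (some (.inl i))) (f none))
    (hr : ∀ j, Disjoint (f (some (.inr j))) (f none)) :
    Pairwise (Disjoint on f) := by
  rintro (_ | i | j) (_ | i' | j') hne
  · exact absurd rfl hne
  · exact (hl i').symm
  · exact (hr j').symm
  · exact hl i
  · exact hll fun h => hne (by rw [h])
  · exact hlr i j'
  · exact hr j
  · exact (hlr i' j).symm
  · exact hrr fun h => hne (by rw [h])

namespace SimpleGraph

section Parent

variable {V : Type*}

theorem connected_of_forall_reachable_or_exists_adj_lt {G : SimpleGraph V} (φ : V → ℕ) (r : V)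
    (h : ∀ v, G.Reachable v r ∨ ∃ w, G.Adj v w ∧ φ w < φ v) : G.Connected := by
  have hreach : ∀ v, G.Reachable v r := by
    intro v
    induction v using (measure φ).wf.induction with
    | _ v ih =>
      obtain hv | ⟨w, hvw, hlt⟩ := h v
      exacts [hv, hvw.reachable.trans (ih w hlt)]
  exact (connected_iff_exists_forall_reachable G).2 ⟨r, fun v => (hreach v).symm⟩

/-- A neighbour of `x` strictly closer to `r`, or `x` itself if there is none. -/
noncomputable def parent (K : SimpleGraph V) (r x : V) : V :=
  if h : ∃ y, K.Adj x y ∧ K.dist y r < K.dist x r then h.choose else x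

variable {K : SimpleGraph V} {r x : V}

theorem adj_parent_and_dist_lt (hx : K.parent r x ≠ x) :
    K.Adj x (K.parent r x) ∧ K.dist (K.parent r x) r < K.dist x r := by
  unfold parent at hx ⊢
  split_ifs at hx ⊢ with h
  exacts [h.choose_spec, absurd rfl hx]

theorem Connected.parent_ne (hK : K.Connected) (hx : x ≠ r) : K.parent r x ≠ x := by
  obtain ⟨p, hp⟩ := hK.exists_walk_length_eq_dist x r
  cases p with
  | nil => exact absurd rfl hx
  | @cons _ y _ hxy q =>
    have hex : ∃ y, K.Adj x y ∧ K.dist y r < K.dist x r :=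
      ⟨y, hxy, (dist_le q).trans_lt (by simp [← hp])⟩
    rw [parent, dif_pos hex]
    exact (hex.choose_spec.1.ne).symm

noncomputable def parentEdges (K : SimpleGraph V) (r : V) (s : Set V) : SimpleGraph V :=
  fromEdgeSet ((fun x => s(x, K.parent r x)) '' s)

theorem parentEdges_le (s : Set V) : K.parentEdges r s ≤ K := by
  intro u v huv
  obtain ⟨⟨x, -, hx⟩, hne⟩ := (fromEdgeSet_adj _).1 huv
  rcases Sym2.eq_iff.1 hx with ⟨rfl, rfl⟩ | ⟨rfl, rfl⟩
  exacts [(adj_parent_and_dist_lt hne.symm).1, (adj_parent_and_dist_lt hne).1.symm]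

theorem parentEdges_adj_parent {s : Set V} (hx : x ∈ s) (hxp : K.parent r x ≠ x) :
    (K.parentEdges r s).Adj x (K.parent r x) :=
  (fromEdgeSet_adj _).2 ⟨⟨x, hx, rfl⟩, hxp.symm⟩

theorem sdiff_parentEdges_adj_parent {s : Set V} (hx : x ∉ s) (hxp : K.parent r x ≠ x) :
    (K \ K.parentEdges r s).Adj x (K.parent r x) := by
  refine ⟨(adj_parent_and_dist_lt hxp).1, fun h => ?_⟩
  obtain ⟨⟨y, hy, hxy⟩, -⟩ := (fromEdgeSet_adj _).1 h
  rcases Sym2.eq_iff.1 hxy with ⟨rfl, -⟩ | ⟨hy, hyx⟩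
  · exact hx hy
  · -- `x` and its parent would each be the parent of the other, each strictly closer to `r`
    subst hy
    have h₁ := (adj_parent_and_dist_lt hxp).2
    have hyp : K.parent r (K.parent r x) ≠ K.parent r x := by rw [hyx]; exact hxp.symm
    have h₂ := (adj_parent_and_dist_lt hyp).2
    rw [hyx] at h₂
    omega

end Parent

section RowCol

variable {α β : Type*}

/-- `R y` on the row `α × {y}` and `C x` on the column `{x} × β`. -/
def rowColGraph (R : β → SimpleGraph α) (C : α → SimpleGraph β) : SimpleGraph (α × β) where
  Adj p q := (p.2 = q.2 ∧ (R p.2).Adj p.1 q.1) ∨ (p.1 = q.1 ∧ (C p.1).Adj p.2 q.2)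
  symm := ⟨by
    rintro ⟨x, y⟩ ⟨x', y'⟩ (⟨rfl, h⟩ | ⟨rfl, h⟩)
    exacts [Or.inl ⟨rfl, h.symm⟩, Or.inr ⟨rfl, h.symm⟩]⟩
  loopless := ⟨by rintro ⟨x, y⟩ (⟨-, h⟩ | ⟨-, h⟩) <;> exact h.ne rfl⟩

variable {R R' : β → SimpleGraph α} {C C' : α → SimpleGraph β}

theorem rowColGraph_adj_of_row {y : β} {u v : α} (h : (R y).Adj u v) :
    (rowColGraph R C).Adj (u, y) (v, y) :=
  Or.inl ⟨rfl, h⟩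

theorem rowColGraph_adj_of_col {x : α} {u v : β} (h : (C x).Adj u v) :
    (rowColGraph R C).Adj (x, u) (x, v) :=
  Or.inr ⟨rfl, h⟩

theorem Reachable.rowColGraph_of_row {y : β} {u v : α} (h : (R y).Reachable u v) :
    (rowColGraph R C).Reachable (u, y) (v, y) :=
  h.map ⟨fun x => (x, y), rowColGraph_adj_of_row⟩

theorem Reachable.rowColGraph_of_col {x : α} {u v : β} (h : (C x).Reachable u v) :
    (rowColGraph R C).Reachable (x, u) (x, v) :=
  h.map ⟨fun y => (x, y), rowColGraph_adj_of_col⟩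

theorem rowColGraph_le_boxProd {G : SimpleGraph α} {H : SimpleGraph β} (hR : ∀ y, R y ≤ G)
    (hC : ∀ x, C x ≤ H) : rowColGraph R C ≤ G □ H := by
  rintro ⟨x, y⟩ ⟨x', y'⟩ (⟨rfl, h⟩ | ⟨rfl, h⟩)
  exacts [boxProd_adj.2 (Or.inl ⟨hR _ h, rfl⟩), boxProd_adj.2 (Or.inr ⟨hC _ h, rfl⟩)]

theorem disjoint_rowColGraph (hR : ∀ y, Disjoint (R y) (R' y)) (hC : ∀ x, Disjoint (C x) (C' x)) :
    Disjoint (rowColGraph R C) (rowColGraph R' C') := by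
  rw [disjoint_left]
  rintro ⟨x, y⟩ ⟨x', y'⟩ (⟨rfl, h⟩ | ⟨rfl, h⟩) (⟨h', h''⟩ | ⟨h', h''⟩)
  · exact disjoint_left.1 (hR y) _ _ h h''
  · exact h.ne h'
  · exact h.ne h'
  · exact disjoint_left.1 (hC x) _ _ h h''

theorem rowColGraph_connected_of_rows {K : SimpleGraph α} {L : SimpleGraph β}
    (hK : K.Connected) (hKR : ∀ y, K ≤ R y) (hL : L.Connected)
    (hLC : ∀ u v, L.Adj u v → ∃ x, (C x).Adj u v) : (rowColGraph R C).Connected := by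
  have hrow (y : β) (u v : α) : (rowColGraph R C).Reachable (u, y) (v, y) :=
    ((hK.preconnected u v).mono (hKR y)).rowColGraph_of_row
  have hcol (x : α) (u v : β) : (rowColGraph R C).Reachable (x, u) (x, v) := by
    obtain ⟨p⟩ := hL.preconnected u v
    induction p generalizing x with
    | nil => rfl
    | cons h _ ih =>
      obtain ⟨c, hc⟩ := hLC _ _ h
      exact (hrow _ x c).trans ((rowColGraph_adj_of_col hc).reachable.trans
        ((hrow _ c x).trans (ih x)))
  have := hK.nonempty
  have := hL.nonempty
  exact (connected_iff _).2 ⟨fun p q => (hrow p.2 p.1 q.1).trans (hcol q.1 p.2 q.2), inferInstance⟩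

def rowColGraphSwapIso (R : β → SimpleGraph α) (C : α → SimpleGraph β) :
    rowColGraph R C ≃g rowColGraph C R where
  toEquiv := Equiv.prodComm α β
  map_rel_iff' := by
    rintro ⟨x, y⟩ ⟨x', y'⟩
    simp [rowColGraph, or_comm]

theorem rowColGraph_connected_of_cols {K : SimpleGraph α} {L : SimpleGraph β}
    (hL : L.Connected) (hLC : ∀ x, L ≤ C x) (hK : K.Connected)
    (hKR : ∀ u v, K.Adj u v → ∃ y, (R y).Adj u v) : (rowColGraph R C).Connected :=
  (rowColGraphSwapIso R C).connected_iff.2 (rowColGraph_connected_of_rows hL hLC hK hKR)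

end RowCol

section Packing

variable {V : Type*}

/-- Connected spanning subgraphs stand in for spanning trees: each contains one
(`Connected.exists_isTree_le`). -/
def HasSpanningPacking (G : SimpleGraph V) (n : ℕ) : Prop :=
  ∃ F : Fin n → SimpleGraph V, (∀ i, F i ≤ G ∧ (F i).Connected) ∧ Pairwise (Disjoint on F)

variable {G : SimpleGraph V} {n : ℕ}

theorem hasSpanningPacking_of_fintype {ι : Type*} [Fintype ι] (F : ι → SimpleGraph V)
    (hF : ∀ i, F i ≤ G ∧ (F i).Connected) (hdisj : Pairwise (Disjoint on F)) :
    G.HasSpanningPacking (Fintype.card ι) :=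
  ⟨F ∘ (Fintype.equivFin ι).symm, fun _ => hF _,
    hdisj.comp_of_injective (Fintype.equivFin ι).symm.injective⟩

theorem Connected.hasSpanningPacking_one (hG : G.Connected) : G.HasSpanningPacking 1 :=
  ⟨fun _ => G, fun _ => ⟨le_rfl, hG⟩, Subsingleton.pairwise⟩

/-- Each member has at least `|V| - 1` edges, and `G` has at most `|V| (|V| - 1) / 2`. -/
theorem HasSpanningPacking.two_mul_le_card [Fintype V] (h : G.HasSpanningPacking n)
    (hV : 2 ≤ Fintype.card V) : 2 * n ≤ Fintype.card V := by
  obtain ⟨F, hF, hdisj⟩ := h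
  have hedges : n * (Fintype.card V - 1) ≤ #G.edgeFinset :=
    calc n * (Fintype.card V - 1) = #(univ : Finset (Fin n)) • (Fintype.card V - 1) := by simp
      _ ≤ ∑ i, #(F i).edgeFinset := card_nsmul_le_sum _ _ _ fun i _ => by
          have := (hF i).2.card_vert_le_card_edgeSet_add_one
          rw [Nat.card_eq_fintype_card, Nat.card_eq_fintype_card, ← edgeFinset_card] at this
          omega
      _ = #(univ.biUnion fun i => (F i).edgeFinset) :=
          (card_biUnion fun i _ j _ hij => by simpa [← disjoint_coe] using hdisj hij).symm
      _ ≤ #G.edgeFinset :=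
          card_le_card (biUnion_subset.2 fun i _ => edgeFinset_mono (hF i).1)
  have hchoose := G.card_edgeFinset_le_card_choose_two
  rw [Nat.choose_two_right] at hchoose
  have : 2 * n * (Fintype.card V - 1) ≤ Fintype.card V * (Fintype.card V - 1) := by
    have := Nat.div_mul_le_self (Fintype.card V * (Fintype.card V - 1)) 2
    nlinarith
  exact Nat.le_of_mul_le_mul_right this (by omega)

theorem bddAbove_hasSpanningPacking [Fintype V] (hV : 2 ≤ Fintype.card V) :
    BddAbove {n | G.HasSpanningPacking n} :=
  ⟨Fintype.card V, fun n hn => by have := hn.two_mul_le_card hV; omega⟩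

end Packing

end SimpleGraph

section GenKappa

variable {V : Type*} {G : SimpleGraph V}

theorem isSteinerTree_toSubgraph {T : SimpleGraph V} (S : Set V) (hle : T ≤ G) (hT : T.IsTree) :
    IsSteinerTree G S (SimpleGraph.toSubgraph T hle) :=
  ⟨fun _ _ => Set.mem_univ _,
    (Subgraph.spanningCoeEquivCoeOfSpanning _ (toSubgraph.isSpanning T hle)).isTree_iff.1 hT⟩

theorem IsSteinerTree.spanningCoe_connected {T : G.Subgraph} (h : IsSteinerTree G Set.univ T) :
    T.spanningCoe.Connected :=
  (Subgraph.spanningCoeEquivCoeOfSpanning T fun v => h.1 (Set.mem_univ v)).connected_iff.2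
    h.2.connected

/-- Steiner trees for `S = V` are spanning trees, and the condition on their vertex sets is
vacuous. -/
theorem steinerKappa_univ [Fintype V] (G : SimpleGraph V) :
    steinerKappa G ↑(univ : Finset V) = sSup {n | G.HasSpanningPacking n} := by
  simp only [steinerKappa, coe_univ]
  congr 1
  ext n
  constructor
  · rintro ⟨T, hT, hdisj⟩
    refine ⟨fun i => (T i).spanningCoe,
      fun i => ⟨Subgraph.spanningCoe_le _, (hT i).spanningCoe_connected⟩, fun i j hij => ?_⟩
    rw [onFun, ← disjoint_edgeSet, Subgraph.edgeSet_spanningCoe, Subgraph.edgeSet_spanningCoe,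
      Set.disjoint_iff_inter_eq_empty]
    exact (hdisj i j hij).1
  · rintro ⟨F, hF, hdisj⟩
    choose T hTF hT using fun i => (hF i).2.exists_isTree_le
    refine ⟨fun i => SimpleGraph.toSubgraph (T i) ((hTF i).trans (hF i).1),
      fun i => isSteinerTree_toSubgraph _ _ (hT i), fun i j hij => ⟨?_, Set.inter_self _⟩⟩
    rw [← Subgraph.edgeSet_spanningCoe, ← Subgraph.edgeSet_spanningCoe,
      ← Set.disjoint_iff_inter_eq_empty, disjoint_edgeSet]
    exact (hdisj hij).mono (hTF i) (hTF j)

theorem genKappa_card_eq_sSup [Fintype V] (hG : G.Connected) :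
    genKappa G (Fintype.card V) = sSup {n | G.HasSpanningPacking n} := by
  have : {m | ∃ S : Finset V, #S = Fintype.card V ∧ steinerKappa G ↑S = m} =
      {sSup {n | G.HasSpanningPacking n}} := by
    ext m
    constructor
    · rintro ⟨S, hS, rfl⟩
      rw [eq_univ_of_card S hS, steinerKappa_univ, Set.mem_singleton_iff]
    · rintro rfl
      exact ⟨univ, card_univ, steinerKappa_univ G⟩
  rw [genKappa, if_pos hG, this, csInf_singleton]

/-- On at most one vertex every number of (edgeless) spanning subgraphs is edge-disjoint, so the
supremum defining `genKappa` falls back to `0`. -/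
theorem genKappa_card_eq_zero [Fintype V] (hV : Fintype.card V ≤ 1) :
    genKappa G (Fintype.card V) = 0 := by
  by_cases hG : G.Connected
  · have : Subsingleton V := Fintype.card_le_one_iff_subsingleton.1 hV
    have hbot : (⊥ : SimpleGraph V).Connected :=
      (connected_iff _).2 ⟨fun u v => Subsingleton.elim u v ▸ Reachable.refl u, hG.nonempty⟩
    have huniv : {n | G.HasSpanningPacking n} = Set.univ :=
      Set.eq_univ_of_forall fun n =>
        ⟨fun _ => ⊥, fun _ => ⟨bot_le, hbot⟩, fun _ _ _ => disjoint_bot_left⟩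
    rw [genKappa_card_eq_sSup hG, huniv, Nat.sSup_of_not_bddAbove not_bddAbove_univ]
  · rw [genKappa, if_neg hG]

theorem le_genKappa_card [Fintype V] (hG : G.Connected) (hV : 2 ≤ Fintype.card V) {n : ℕ}
    (h : G.HasSpanningPacking n) : n ≤ genKappa G (Fintype.card V) := by
  rw [genKappa_card_eq_sSup hG]
  exact le_csSup (bddAbove_hasSpanningPacking hV) h

theorem SimpleGraph.Connected.exists_genKappa_le_hasSpanningPacking [Fintype V]
    (hG : G.Connected) :
    ∃ k, genKappa G (Fintype.card V) ≤ k + 1 ∧ G.HasSpanningPacking (k + 1) ∧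
      2 * k + 1 ≤ Fintype.card V := by
  have hpos : 0 < Fintype.card V := Fintype.card_pos_iff.2 hG.nonempty
  rcases le_or_gt (Fintype.card V) 1 with hV | hV
  · exact ⟨0, by rw [genKappa_card_eq_zero hV]; omega, hG.hasSpanningPacking_one, by omega⟩
  have hbdd := bddAbove_hasSpanningPacking (G := G) hV
  have hmem := Nat.sSup_mem ⟨1, hG.hasSpanningPacking_one⟩ hbdd
  have hone := le_csSup hbdd hG.hasSpanningPacking_one
  rw [← genKappa_card_eq_sSup hG] at hmem hone
  have := hmem.two_mul_le_card hV
  refine ⟨genKappa G (Fintype.card V) - 1, by omega, ?_, by omega⟩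
  rwa [Nat.sub_add_cancel hone]

end GenKappa

namespace SimpleGraph

section Split

variable {γ δ ι : Type*} (e : Option (ι ⊕ ι) ↪ δ) (K P : SimpleGraph γ)

/-- `e (some (.inl i))` and `e (some (.inr i))` are the two markers of `i`, where `i` gets `K \ P`
and `P`; `splitRest` gets the complementary parts there and `K` away from the markers. -/
noncomputable def splitPiece (i : ι) (z : δ) : SimpleGraph γ :=
  if z = e (some (.inl i)) then K \ P else if z = e (some (.inr i)) then P else ⊥

noncomputable def splitRest (z : δ) : SimpleGraph γ :=
  if z ∈ Set.range (e ∘ some ∘ .inl) then P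
  else if z ∈ Set.range (e ∘ some ∘ .inr) then K \ P else K

variable {K P}

theorem splitPiece_le (hP : P ≤ K) (i : ι) (z : δ) : splitPiece e K P i z ≤ K := by
  unfold splitPiece
  split_ifs
  exacts [sdiff_le, hP, bot_le]

theorem splitRest_le (hP : P ≤ K) (z : δ) : splitRest e K P z ≤ K := by
  unfold splitRest
  split_ifs
  exacts [hP, sdiff_le, le_rfl]

theorem pairwise_disjoint_splitPiece (z : δ) :
    Pairwise (Disjoint on fun i => splitPiece e K P i z) := by
  intro i j hij
  simp only [onFun, splitPiece]
  split_ifs <;> simp_all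

theorem disjoint_splitPiece_splitRest (i : ι) (z : δ) :
    Disjoint (splitPiece e K P i z) (splitRest e K P z) := by
  simp only [splitPiece, splitRest]
  split_ifs <;> simp_all [disjoint_sdiff_self_left, disjoint_sdiff_self_right]

theorem exists_splitPiece_adj (i : ι) {u v : γ} (h : K.Adj u v) :
    ∃ z, (splitPiece e K P i z).Adj u v := by
  by_cases hP : P.Adj u v
  · exact ⟨e (some (.inr i)), by simp [splitPiece, hP]⟩
  · exact ⟨e (some (.inl i)), by simp [splitPiece, h, hP]⟩

theorem splitRest_of_notMem {z : δ} (hz : z ∉ Set.range (e ∘ some)) : splitRest e K P z = K := by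
  simp only [Set.mem_range, comp_apply, not_exists] at hz
  simp [splitRest, hz]

theorem splitRest_inl (i : ι) : splitRest e K P (e (some (.inl i))) = P := by
  simp [splitRest]

theorem splitRest_inr (i : ι) : splitRest e K P (e (some (.inr i))) = K \ P := by
  simp [splitRest]

end Split

section Product

variable {α β κ μ : Type*} (ex : Option (κ ⊕ κ) ↪ α) (ey : Option (μ ⊕ μ) ↪ β)
  {K : SimpleGraph α} {L : SimpleGraph β}

noncomputable def productRest (K : SimpleGraph α) (L : SimpleGraph β) : SimpleGraph (α × β) :=
  rowColGraph (splitRest ey K (K.parentEdges (ex none) (Set.range (ex ∘ some ∘ .inr))))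
    (splitRest ex L (L.parentEdges (ey none) (Set.range (ey ∘ some ∘ .inl))))

theorem productRest_exists_adj_dist_lt (hK : K.Connected) (hL : L.Connected) (a : κ ⊕ κ)
    (b : μ ⊕ μ) : ∃ w, (productRest ex ey K L).Adj (ex (some a), ey (some b)) w ∧
      K.dist w.1 (ex none) + L.dist w.2 (ey none) <
        K.dist (ex (some a)) (ex none) + L.dist (ey (some b)) (ey none) := by
  have hKp : K.parent (ex none) (ex (some a)) ≠ ex (some a) := hK.parent_ne (by simp)
  have hLp : L.parent (ey none) (ey (some b)) ≠ ey (some b) := hL.parent_ne (by simp)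
  have hKd := (adj_parent_and_dist_lt hKp).2
  have hLd := (adj_parent_and_dist_lt hLp).2
  rcases a with i | i <;> rcases b with j | j
  · refine ⟨_, rowColGraph_adj_of_col (by
      rw [splitRest_inl]; exact parentEdges_adj_parent (Set.mem_range_self j) hLp),
      by dsimp only; omega⟩
  · refine ⟨_, rowColGraph_adj_of_row (by
      rw [splitRest_inr]; exact sdiff_parentEdges_adj_parent (by simp) hKp),
      by dsimp only; omega⟩
  · refine ⟨_, rowColGraph_adj_of_row (by
      rw [splitRest_inl]; exact parentEdges_adj_parent (Set.mem_range_self i) hKp),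
      by dsimp only; omega⟩
  · refine ⟨_, rowColGraph_adj_of_col (by
      rw [splitRest_inr]; exact sdiff_parentEdges_adj_parent (by simp) hLp),
      by dsimp only; omega⟩

/-- Off the markers a vertex reaches the root `(ex none, ey none)` along full copies of `K` and
`L`; on them it has a neighbour closer to the root. -/
theorem productRest_connected (hK : K.Connected) (hL : L.Connected) :
    (productRest ex ey K L).Connected := by
  have hx0 : ex none ∉ Set.range (ex ∘ some) := by simp
  have hy0 : ey none ∉ Set.range (ey ∘ some) := by simp
  refine connected_of_forall_reachable_or_exists_adj_lt
    (fun p => K.dist p.1 (ex none) + L.dist p.2 (ey none)) (ex none, ey none) ?_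
  rintro ⟨x, y⟩
  by_cases hx : x ∈ Set.range (ex ∘ some)
  · by_cases hy : y ∈ Set.range (ey ∘ some)
    · obtain ⟨a, rfl⟩ := hx
      obtain ⟨b, rfl⟩ := hy
      exact Or.inr (productRest_exists_adj_dist_lt ex ey hK hL a b)
    · left
      refine ((hK.preconnected x (ex none)).mono ?_).rowColGraph_of_row.trans
        ((hL.preconnected y (ey none)).mono ?_).rowColGraph_of_col
      · rw [splitRest_of_notMem _ hy]
      · rw [splitRest_of_notMem _ hx0]
  · left
    refine ((hL.preconnected y (ey none)).mono ?_).rowColGraph_of_col.trans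
      ((hK.preconnected x (ex none)).mono ?_).rowColGraph_of_row
    · rw [splitRest_of_notMem _ hx]
    · rw [splitRest_of_notMem _ hy0]

variable (T : Option κ → SimpleGraph α) (S : Option μ → SimpleGraph β)

noncomputable def productRows : Option (κ ⊕ μ) → β → SimpleGraph α
  | some (.inl i) => fun _ => T (some i)
  | some (.inr j) =>
    splitPiece ey (T none) ((T none).parentEdges (ex none) (Set.range (ex ∘ some ∘ .inr))) j
  | none => splitRest ey (T none) ((T none).parentEdges (ex none) (Set.range (ex ∘ some ∘ .inr)))

noncomputable def productCols : Option (κ ⊕ μ) → α → SimpleGraph β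
  | some (.inl i) =>
    splitPiece ex (S none) ((S none).parentEdges (ey none) (Set.range (ey ∘ some ∘ .inl))) i
  | some (.inr j) => fun _ => S (some j)
  | none => splitRest ex (S none) ((S none).parentEdges (ey none) (Set.range (ey ∘ some ∘ .inl)))

variable {T S}

theorem productRows_le {G : SimpleGraph α} (hT : ∀ s, T s ≤ G) (t : Option (κ ⊕ μ)) (y : β) :
    productRows ex ey T t y ≤ G := by
  rcases t with _ | i | j
  exacts [(splitRest_le _ (parentEdges_le _) y).trans (hT none), hT _,
    (splitPiece_le _ (parentEdges_le _) j y).trans (hT none)]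

theorem productCols_le {H : SimpleGraph β} (hS : ∀ s, S s ≤ H) (t : Option (κ ⊕ μ)) (x : α) :
    productCols ex ey S t x ≤ H := by
  rcases t with _ | i | j
  exacts [(splitRest_le _ (parentEdges_le _) x).trans (hS none),
    (splitPiece_le _ (parentEdges_le _) i x).trans (hS none), hS _]

theorem pairwise_disjoint_productRows (hT : Pairwise (Disjoint on T)) (y : β) :
    Pairwise (Disjoint on fun t => productRows ex ey T t y) :=
  pairwise_disjoint_on_option_sum (fun _ _ h => hT (Option.some_injective _ |>.ne h))
    (pairwise_disjoint_splitPiece _ y)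
    (fun i j => (hT (Option.some_ne_none i)).mono_right (splitPiece_le _ (parentEdges_le _) j y))
    (fun i => (hT (Option.some_ne_none i)).mono_right (splitRest_le _ (parentEdges_le _) y))
    (fun j => disjoint_splitPiece_splitRest _ j y)

theorem pairwise_disjoint_productCols (hS : Pairwise (Disjoint on S)) (x : α) :
    Pairwise (Disjoint on fun t => productCols ex ey S t x) :=
  pairwise_disjoint_on_option_sum (pairwise_disjoint_splitPiece _ x)
    (fun _ _ h => hS (Option.some_injective _ |>.ne h))
    (fun i j =>
      ((hS (Option.some_ne_none j)).mono_right (splitPiece_le _ (parentEdges_le _) i x)).symm)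
    (fun i => disjoint_splitPiece_splitRest _ i x)
    (fun j => (hS (Option.some_ne_none j)).mono_right (splitRest_le _ (parentEdges_le _) x))

theorem connected_rowColGraph_productRows_productCols (hT : ∀ s, (T s).Connected)
    (hS : ∀ s, (S s).Connected) (t : Option (κ ⊕ μ)) :
    (rowColGraph (productRows ex ey T t) (productCols ex ey S t)).Connected := by
  rcases t with _ | i | j
  · exact productRest_connected ex ey (hT none) (hS none)
  · exact rowColGraph_connected_of_rows (hT (some i)) (fun _ => le_rfl) (hS none)
      fun _ _ h => exists_splitPiece_adj _ i h
  · exact rowColGraph_connected_of_cols (hS (some j)) (fun _ => le_rfl) (hT none)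
      fun _ _ h => exists_splitPiece_adj _ j h

end Product

theorem HasSpanningPacking.boxProd {α β : Type*} [Fintype α] [Fintype β] {G : SimpleGraph α}
    {H : SimpleGraph β} {k l : ℕ} (hG : G.HasSpanningPacking (k + 1))
    (hH : H.HasSpanningPacking (l + 1)) (hk : 2 * k + 1 ≤ Fintype.card α)
    (hl : 2 * l + 1 ≤ Fintype.card β) : (G □ H).HasSpanningPacking (k + l + 1) := by
  obtain ⟨F, hF, hFdisj⟩ := hG
  obtain ⟨F', hF', hF'disj⟩ := hH
  obtain ⟨ex⟩ : Nonempty (Option (Fin k ⊕ Fin k) ↪ α) :=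
    Function.Embedding.nonempty_of_card_le (by simp; omega)
  obtain ⟨ey⟩ : Nonempty (Option (Fin l ⊕ Fin l) ↪ β) :=
    Function.Embedding.nonempty_of_card_le (by simp; omega)
  set T := F ∘ (finSuccEquiv k).symm
  set S := F' ∘ (finSuccEquiv l).symm
  have hpacking := hasSpanningPacking_of_fintype
    (fun t => rowColGraph (productRows ex ey T t) (productCols ex ey S t))
    (fun t => ⟨rowColGraph_le_boxProd (productRows_le ex ey (fun _ => (hF _).1) t)
        (productCols_le ex ey (fun _ => (hF' _).1) t),
      connected_rowColGraph_productRows_productCols ex ey (fun _ => (hF _).2)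
        (fun _ => (hF' _).2) t⟩)
    (fun t t' h => disjoint_rowColGraph
      (fun y => pairwise_disjoint_productRows ex ey
        (hFdisj.comp_of_injective (finSuccEquiv k).symm.injective) y h)
      (fun x => pairwise_disjoint_productCols ex ey
        (hF'disj.comp_of_injective (finSuccEquiv l).symm.injective) x h))
  simpa using hpacking

end SimpleGraph

theorem stmt19 {α β : Type*} [Fintype α] [Fintype β] (G : SimpleGraph α) (H : SimpleGraph β)
    (hG : G.Connected) (hH : H.Connected) :
    genKappa G (Fintype.card α) + genKappa H (Fintype.card β) - 1 ≤
      genKappa (G □ H) (Fintype.card (α × β)) := by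
  obtain ⟨k, hGk, hGpacking, hk⟩ := hG.exists_genKappa_le_hasSpanningPacking
  obtain ⟨l, hHl, hHpacking, hl⟩ := hH.exists_genKappa_le_hasSpanningPacking
  rcases le_or_gt (Fintype.card (α × β)) 1 with hprod | hprod
  · rw [Fintype.card_prod] at hprod
    have := Fintype.card_pos_iff.2 hG.nonempty
    have := Fintype.card_pos_iff.2 hH.nonempty
    rw [genKappa_card_eq_zero (by nlinarith), genKappa_card_eq_zero (by nlinarith)]
    exact Nat.zero_le _
  calc genKappa G (Fintype.card α) + genKappa H (Fintype.card β) - 1 ≤ k + l + 1 := by omega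
    _ ≤ genKappa (G □ H) (Fintype.card (α × β)) :=
      le_genKappa_card (connected_boxProd.2 ⟨hG, hH⟩) hprod (hGpacking.boxProd hHpacking hk hl)
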